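/- arXiv:1107.5973 — 2 statements merged into one kernel-verified Lean document; each statement's English description precedes it below -/
import Mathlib

section
/- Let G be a group and S, T, U nonempty subsets of G. Then (S, T, U) is a basic TPP triple if and only if 1 ∈ S ∩ T ∩ U, Q(T) ∩ Q(U) = {1}, and Q(S) ∩ Q(T)Q(U) = {1}, where Q(T)Q(U) = {tu : t ∈ Q(T), u ∈ Q(U)}. -/
open Pointwise

/-- The right quotient `Q(X) = {x y⁻¹ : x, y ∈ X}` of a subset of a group. -/
def rightQuotient {G : Type*} [Group G] (X : Set G) : Set G :=
  {g | ∃ x ∈ X, ∃ y ∈ X, g = x * y⁻¹}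

/-- Subsets `S, T, U` of a group satisfy the Triple Product Property if for all
`s ∈ Q(S)`, `t ∈ Q(T)`, `u ∈ Q(U)`, `s * t * u = 1` iff `s = t = u = 1`. -/
def TPP {G : Type*} [Group G] (S T U : Set G) : Prop :=
  ∀ s ∈ rightQuotient S, ∀ t ∈ rightQuotient T, ∀ u ∈ rightQuotient U,
    (s * t * u = 1 ↔ s = 1 ∧ t = 1 ∧ u = 1)

/-! `s t u = 1` says `s⁻¹ = t u ∈ Q(S) ∩ Q(T)Q(U)`; once `s = 1` it says `t = u⁻¹ ∈ Q(T) ∩ Q(U)`.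
Since quotient sets are closed under inversion, the two intersection conditions are exactly what
forces `s = t = u = 1`. -/

section

variable {G : Type*} [Group G] {S T U : Set G}

lemma one_mem_rightQuotient (hS : S.Nonempty) : (1 : G) ∈ rightQuotient S := by
  obtain ⟨x, hx⟩ := hS
  exact ⟨x, hx, x, hx, (mul_inv_cancel x).symm⟩

lemma inv_mem_rightQuotient {g : G} (hg : g ∈ rightQuotient S) : g⁻¹ ∈ rightQuotient S := by
  obtain ⟨x, hx, y, hy, rfl⟩ := hg
  exact ⟨y, hy, x, hx, by group⟩

namespace TPP

lemma inter_rightQuotient_eq_one (h : TPP S T U) (hS : S.Nonempty) (hT : T.Nonempty)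
    (hU : U.Nonempty) : rightQuotient T ∩ rightQuotient U = {1} := by
  refine Set.eq_singleton_iff_unique_mem.2
    ⟨⟨one_mem_rightQuotient hT, one_mem_rightQuotient hU⟩, ?_⟩
  rintro t ⟨ht, hu⟩
  exact ((h 1 (one_mem_rightQuotient hS) t ht t⁻¹ (inv_mem_rightQuotient hu)).1 (by group)).2.1

lemma inter_mul_eq_one (h : TPP S T U) (hS : S.Nonempty) (hT : T.Nonempty)
    (hU : U.Nonempty) : rightQuotient S ∩ (rightQuotient T * rightQuotient U) = {1} := by
  refine Set.eq_singleton_iff_unique_mem.2 ⟨⟨one_mem_rightQuotient hS,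
    ⟨1, one_mem_rightQuotient hT, 1, one_mem_rightQuotient hU, mul_one 1⟩⟩, ?_⟩
  rintro _ ⟨hs, t, ht, u, hu, rfl⟩
  obtain ⟨-, rfl, rfl⟩ := (h (t * u)⁻¹ (inv_mem_rightQuotient hs) t ht u hu).1 (by group)
  exact mul_one 1

end TPP

lemma tpp_of_inter_eq_one (hTU : rightQuotient T ∩ rightQuotient U = {1})
    (hSTU : rightQuotient S ∩ (rightQuotient T * rightQuotient U) = {1}) : TPP S T U := by
  intro s hs t ht u hu
  refine ⟨fun hstu => ?_, by rintro ⟨rfl, rfl, rfl⟩; group⟩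
  have hs_one : s = 1 := by
    have hs_inv : s⁻¹ ∈ rightQuotient S ∩ (rightQuotient T * rightQuotient U) :=
      ⟨inv_mem_rightQuotient hs, t, ht, u, hu,
        eq_inv_of_mul_eq_one_right (a := s) (by rwa [← mul_assoc])⟩
    rw [hSTU] at hs_inv
    exact inv_eq_one.1 hs_inv
  subst hs_one
  have htu_one : t * u = 1 := by simpa using hstu
  have ht_one : t = 1 := by
    have htu : t ∈ rightQuotient T ∩ rightQuotient U := by
      refine ⟨ht, ?_⟩
      rw [eq_inv_of_mul_eq_one_left htu_one]
      exact inv_mem_rightQuotient hu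
    rwa [hTU] at htu
  subst ht_one
  exact ⟨rfl, rfl, by simpa using htu_one⟩

lemma tpp_iff_inter_eq_one (hS : S.Nonempty) (hT : T.Nonempty) (hU : U.Nonempty) :
    TPP S T U ↔ rightQuotient T ∩ rightQuotient U = {1} ∧
      rightQuotient S ∩ (rightQuotient T * rightQuotient U) = {1} :=
  ⟨fun h => ⟨h.inter_rightQuotient_eq_one hS hT hU, h.inter_mul_eq_one hS hT hU⟩,
    fun h => tpp_of_inter_eq_one h.1 h.2⟩

end

theorem stmt_10_general {G : Type*} [Group G] (S T U : Set G) :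
    (TPP S T U ∧ (1 : G) ∈ S ∩ T ∩ U) ↔
      ((1 : G) ∈ S ∩ T ∩ U ∧ rightQuotient T ∩ rightQuotient U = {1} ∧
        rightQuotient S ∩ (rightQuotient T * rightQuotient U) = {1}) := by
  have tpp_iff (h1 : (1 : G) ∈ S ∩ T ∩ U) := tpp_iff_inter_eq_one ⟨1, h1.1.1⟩ ⟨1, h1.1.2⟩ ⟨1, h1.2⟩
  exact ⟨fun ⟨h, h1⟩ => ⟨h1, (tpp_iff h1).1 h⟩, fun ⟨h1, h⟩ => ⟨(tpp_iff h1).2 h, h1⟩⟩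

theorem stmt_10 {G : Type*} [Group G] (S T U : Set G)
    (hS : S.Nonempty) (hT : T.Nonempty) (hU : U.Nonempty) :
    (TPP S T U ∧ (1 : G) ∈ S ∩ T ∩ U) ↔
      ((1 : G) ∈ S ∩ T ∩ U ∧ rightQuotient T ∩ rightQuotient U = {1} ∧
        rightQuotient S ∩ (rightQuotient T * rightQuotient U) = {1}) :=
  stmt_10_general S T U
end

section
/- Let G be a group, let (S, T, U) be a basic TPP triple of nonempty subsets of G (i.e. a TPP triple with 1 ∈ S ∩ T ∩ U), and let c ∈ G with c ∉ S. Then (S ∪ {c}, T, U) is a TPP triple if and only if cS⁻¹ ∩ Q(T)Q(U) = ∅ and Sc⁻¹ ∩ Q(T)Q(U) = ∅, where cS⁻¹ = {cx⁻¹ : x ∈ S}, Sc⁻¹ = {xc⁻¹ : x ∈ S}, and Q(T)Q(U) = {tu : t ∈ Q(T), u ∈ Q(U)}. -/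
open Pointwise

section

variable {G : Type*} [Group G]

lemma one_mem_rightQuotient_s15 {X : Set G} (hX : X.Nonempty) : (1 : G) ∈ rightQuotient X :=
  let ⟨x, hx⟩ := hX
  ⟨x, hx, x, hx, (mul_inv_cancel x).symm⟩

lemma TPP.eq_of_mul_inv_mem {X T U : Set G} (h : TPP X T U) {x y : G} (hx : x ∈ X) (hy : y ∈ X)
    (hxy : x * y⁻¹ ∈ rightQuotient T * rightQuotient U) : x = y := by
  obtain ⟨t, ht, u, hu, htu : t * u = x * y⁻¹⟩ := hxy
  have hs : y * x⁻¹ ∈ rightQuotient X := ⟨y, hy, x, hx, rfl⟩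
  have hs1 : y * x⁻¹ = 1 := ((h _ hs t ht u hu).1 (by rw [mul_assoc, htu]; group)).1
  exact (mul_inv_eq_one.1 hs1).symm

/-- Adjoining `c` to `S` only creates the new quotients `x c⁻¹`, `c x⁻¹` (`x ∈ S`) and `1`,
and the inverse of each of the first two kinds is of the other kind. -/
lemma mem_rightQuotient_of_mem_rightQuotient_union_singleton {S P : Set G} {c s : G}
    (hS : S.Nonempty) (hcS : (fun x => c * x⁻¹) '' S ∩ P = ∅)
    (hSc : (fun x => x * c⁻¹) '' S ∩ P = ∅)
    (hs : s ∈ rightQuotient (S ∪ {c})) (hsP : s⁻¹ ∈ P) : s ∈ rightQuotient S := by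
  obtain ⟨x, hx | rfl, y, hy | rfl, rfl⟩ := hs
  · exact ⟨x, hx, y, hy, rfl⟩
  · exact absurd ⟨⟨x, hx, rfl⟩, by simpa using hsP⟩ (Set.eq_empty_iff_forall_notMem.1 hcS _)
  · exact absurd ⟨⟨y, hy, rfl⟩, by simpa using hsP⟩ (Set.eq_empty_iff_forall_notMem.1 hSc _)
  · simpa using one_mem_rightQuotient_s15 hS

end

theorem stmt_15_general {G : Type*} [Group G] (S T U : Set G)
    (hS : S.Nonempty) (h : TPP S T U) (c : G) (hc : c ∉ S) :
    TPP (S ∪ {c}) T U ↔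
      ((fun x => c * x⁻¹) '' S ∩ (rightQuotient T * rightQuotient U) = ∅ ∧
        (fun x => x * c⁻¹) '' S ∩ (rightQuotient T * rightQuotient U) = ∅) := by
  constructor
  · intro H
    constructor <;> refine Set.eq_empty_of_forall_notMem ?_ <;> rintro _ ⟨⟨x, hx, rfl⟩, hP⟩
    · exact hc (H.eq_of_mul_inv_mem (Or.inr rfl) (Or.inl hx) hP ▸ hx)
    · exact hc (H.eq_of_mul_inv_mem (Or.inl hx) (Or.inr rfl) hP ▸ hx)
  · rintro ⟨hcS, hSc⟩ s hs t ht u hu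
    refine ⟨fun hstu => (h s ?_ t ht u hu).1 hstu, by rintro ⟨rfl, rfl, rfl⟩; simp⟩
    have hP : s⁻¹ ∈ rightQuotient T * rightQuotient U :=
      ⟨t, ht, u, hu, eq_inv_of_mul_eq_one_right (by rwa [← mul_assoc])⟩
    exact mem_rightQuotient_of_mem_rightQuotient_union_singleton hS hcS hSc hs hP

theorem stmt_15 {G : Type*} [Group G] (S T U : Set G)
    (hS : S.Nonempty) (hT : T.Nonempty) (hU : U.Nonempty)
    (h : TPP S T U) (h1 : (1 : G) ∈ S ∩ T ∩ U) (c : G) (hc : c ∉ S) :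
    TPP (S ∪ {c}) T U ↔
      ((fun x => c * x⁻¹) '' S ∩ (rightQuotient T * rightQuotient U) = ∅ ∧
        (fun x => x * c⁻¹) '' S ∩ (rightQuotient T * rightQuotient U) = ∅) :=
  stmt_15_general S T U hS h c hc
end
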